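/- Let P be the map on entire functions defined by P(f)(z) = f(0)·f'(z) and let f be an entire function such that the sequence |c_n(f)|·(n!)² is bounded, where c_n(f) = ∏_{j=0}^{n-1} (f^{(j)}(0))^{2^{n-1-j}}. Then P^{n}(f)(0) → 0 as n → ∞; in particular the orbit of f under P is not dense in H(ℂ). -/

import Mathlib

/-!
Induction gives `P^n(f) = c_n(f) · f^{(n)}`, so `|P^n(f)(0)| ≤ |c_n(f)| (n!)² · |f^{(n)}(0)| / n!`.
The first factor is bounded by hypothesis and the second is the `n`-th Taylor coefficient of the
entire function `f` at `0`, which tends to `0` because the Taylor series converges at `z = 1`.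
Hence the orbit is bounded at `0` and cannot approximate a large constant function.
-/

open Filter

/-- The polynomial map `P(f)(z) = f(0) · f'(z)` on functions `ℂ → ℂ`. -/
noncomputable def P (f : ℂ → ℂ) : ℂ → ℂ := fun z => f 0 * deriv f z

/-- `c_n(f) = ∏_{j=0}^{n-1} (f^{(j)}(0))^{2^{n-1-j}}`. -/
noncomputable def c (n : ℕ) (f : ℂ → ℂ) : ℂ :=
  ∏ j ∈ Finset.range n, (iteratedDeriv j f 0) ^ 2 ^ (n - 1 - j)

open Nat

lemma c_succ (n : ℕ) (f : ℂ → ℂ) : c (n + 1) f = c n f ^ 2 * iteratedDeriv n f 0 := by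
  have hexp : ∀ j ∈ Finset.range n,
      iteratedDeriv j f 0 ^ 2 ^ (n + 1 - 1 - j) = (iteratedDeriv j f 0 ^ 2 ^ (n - 1 - j)) ^ 2 := by
    intro j hj
    have hsub : n + 1 - 1 - j = n - 1 - j + 1 := by have := Finset.mem_range.mp hj; omega
    rw [← pow_mul, hsub, pow_succ]
  rw [c, Finset.prod_range_succ, Finset.prod_congr rfl hexp, Finset.prod_pow, c,
    Nat.add_sub_cancel, Nat.sub_self, pow_zero, pow_one]

lemma iterate_P_eq_c_mul_iteratedDeriv {f : ℂ → ℂ} (hf : Differentiable ℂ f) (n : ℕ) :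
    P^[n] f = fun z => c n f * iteratedDeriv n f z := by
  induction n with
  | zero => simp [c]
  | succ n ih =>
    have hdiff : Differentiable ℂ (iteratedDeriv n f) :=
      (hf.contDiff (n := (n + 1 : ℕ))).differentiable_iteratedDeriv n (by norm_cast; omega)
    funext z
    rw [Function.iterate_succ_apply', ih, P, deriv_const_mul _ (hdiff z), ← iteratedDeriv_succ,
      c_succ]
    ring

lemma tendsto_inv_factorial_smul_iteratedDeriv {E : Type*} [NormedAddCommGroup E]
    [NormedSpace ℂ E] [CompleteSpace E] {f : ℂ → E} (hf : Differentiable ℂ f) (z₀ : ℂ) :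
    Tendsto (fun n : ℕ => (n ! : ℂ)⁻¹ • iteratedDeriv n f z₀) atTop (nhds 0) := by
  simpa using (Complex.hasSum_taylorSeries_of_entire hf z₀ (z₀ + 1)).summable.tendsto_atTop_zero

lemma norm_c_mul_iteratedDeriv_le (f : ℂ → ℂ) (n : ℕ) :
    ‖c n f * iteratedDeriv n f 0‖ ≤
      ‖c n f‖ * (n ! : ℝ) ^ 2 * ‖(n ! : ℂ)⁻¹ • iteratedDeriv n f 0‖ := by
  have hfact : (1 : ℝ) ≤ n ! := mod_cast n.factorial_pos
  have hsplit : ‖iteratedDeriv n f 0‖ = n ! * ‖(n ! : ℂ)⁻¹ • iteratedDeriv n f 0‖ := by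
    rw [norm_smul, norm_inv, Complex.norm_natCast, mul_inv_cancel_left₀ (by positivity)]
  calc ‖c n f * iteratedDeriv n f 0‖
      = ‖c n f‖ * n ! * ‖(n ! : ℂ)⁻¹ • iteratedDeriv n f 0‖ := by rw [norm_mul, hsplit, mul_assoc]
    _ ≤ ‖c n f‖ * (n ! : ℝ) ^ 2 * ‖(n ! : ℂ)⁻¹ • iteratedDeriv n f 0‖ := by
      gcongr
      exact le_self_pow₀ hfact two_ne_zero

lemma not_forall_approx_of_isBounded_range {F : ℕ → ℂ → ℂ} {z₀ : ℂ}
    (hF : Bornology.IsBounded (Set.range fun n => F n z₀)) :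
    ¬ ∀ g : ℂ → ℂ, Differentiable ℂ g → ∀ ε > (0 : ℝ), ∀ R > (0 : ℝ),
        ∃ n : ℕ, ∀ z : ℂ, ‖z‖ ≤ R → ‖F n z - g z‖ < ε := by
  intro hdense
  obtain ⟨B, hB⟩ := hF.exists_norm_le
  obtain ⟨n, hn⟩ := hdense (fun _ => ((B + 1 : ℝ) : ℂ)) (differentiable_const _) 1 one_pos
    (‖z₀‖ + 1) (by positivity)
  have hclose := hn z₀ (by linarith)
  have hbound := hB _ (Set.mem_range_self n)
  have htriangle := norm_sub_norm_le ((B + 1 : ℝ) : ℂ) (F n z₀)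
  rw [norm_sub_rev, Complex.norm_real, Real.norm_eq_abs] at htriangle
  linarith [le_abs_self (B + 1)]

/-- If `|c_n(f)|·(n!)²` is bounded then `P^n(f)(0) → 0`, and in particular the
orbit of `f` under `P` is not dense in the space of entire functions. -/
theorem bounded_c_implies_not_dense_orbit (f : ℂ → ℂ) (hf : Differentiable ℂ f)
    (L : ℝ) (hL : ∀ n : ℕ, ‖c n f‖ * (n.factorial : ℝ) ^ 2 ≤ L) :
    Tendsto (fun n : ℕ => (P^[n] f) 0) atTop (nhds 0) ∧
    ¬ ∀ g : ℂ → ℂ, Differentiable ℂ g → ∀ ε > (0 : ℝ), ∀ R > (0 : ℝ),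
        ∃ n : ℕ, ∀ z : ℂ, ‖z‖ ≤ R →
          ‖(P^[n] f) z - g z‖ < ε := by
  have htaylor := (tendsto_inv_factorial_smul_iteratedDeriv hf 0).norm
  rw [norm_zero] at htaylor
  have htend : Tendsto (fun n : ℕ => (P^[n] f) 0) atTop (nhds 0) := by
    refine squeeze_zero_norm (fun n => ?_) (by simpa only [mul_zero] using htaylor.const_mul L)
    rw [iterate_P_eq_c_mul_iteratedDeriv hf]
    exact (norm_c_mul_iteratedDeriv_le f n).trans
      (mul_le_mul_of_nonneg_right (hL n) (norm_nonneg _))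
  exact ⟨htend, not_forall_approx_of_isBounded_range (Metric.isBounded_range_of_tendsto _ htend)⟩
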